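/- Let B ≠ 0 on U and define φ₁ = −3·A·(A·S − B_{0.1})/(5·B²) − 3·(A_{0.1} + B_{1.0} − 3·A·R)/(5·B) − (6/5)·Q and φ₂ = 3·(A·S − B_{0.1})/(5·B) − (3/5)·R (formulas (4.8)). Then the pseudoscalar field Ω = (5/3)·(∂φ₁/∂y − ∂φ₂/∂x) is given by the effective formula (4.17): Ω = 2·A·B_{0.1}·(A·S − B_{0.1})/B³ + (2·A_{0.1} − 3·A·R)·B_{0.1}/B² + (B_{1.0} − 2·A_{0.1})·A·S/B² + (A·B_{0.2} − A²·S_{0.1})/B² − A_{0.2}/B + (3·A_{0.1}·R + 3·A·R_{0.1} − A_{1.0}·S − A·S_{1.0})/B + R_{1.0} − 2·Q_{0.1}. -/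

import Mathlib

noncomputable section

open Real

/-- Partial derivative in the first argument (`f_{1.0}`). -/
def pdx (f : ℝ → ℝ → ℝ) : ℝ → ℝ → ℝ := fun x y => deriv (fun t => f t y) x

/-- Partial derivative in the second argument (`f_{0.1}`). -/
def pdy (f : ℝ → ℝ → ℝ) : ℝ → ℝ → ℝ := fun x y => deriv (fun t => f x t) y

/-- Indexed partial derivative: `0 ↦ ∂/∂x`, `1 ↦ ∂/∂y`. -/
def pd (i : Fin 2) (f : ℝ → ℝ → ℝ) : ℝ → ℝ → ℝ := if i = 0 then pdx f else pdy f

/-- Smoothness of a two-variable real function on a set `U ⊆ ℝ²`. -/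
def Smooth2 (U : Set (ℝ × ℝ)) (f : ℝ → ℝ → ℝ) : Prop :=
  ContDiffOn ℝ (⊤ : ℕ∞) (Function.uncurry f) U

/-- The quantity `A` of formula (1.6). -/
def coefA (P Q R S : ℝ → ℝ → ℝ) : ℝ → ℝ → ℝ := fun x y =>
  pdy (pdy P) x y - 2 * pdx (pdy Q) x y + pdx (pdx R) x y
    + 2 * P x y * pdx S x y + S x y * pdx P x y
    - 3 * P x y * pdy R x y - 3 * R x y * pdy P x y
    - 3 * Q x y * pdx R x y + 6 * Q x y * pdy Q x y

/-- The quantity `B` of formula (1.6). -/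
def coefB (P Q R S : ℝ → ℝ → ℝ) : ℝ → ℝ → ℝ := fun x y =>
  pdx (pdx S) x y - 2 * pdx (pdy R) x y + pdy (pdy Q) x y
    - 2 * S x y * pdy P x y - P x y * pdy S x y
    + 3 * S x y * pdx Q x y + 3 * Q x y * pdx S x y
    + 3 * R x y * pdy Q x y - 6 * R x y * pdx R x y

/-- `φ₁` given by formula (4.8). -/
def phiB1 (P Q R S : ℝ → ℝ → ℝ) : ℝ → ℝ → ℝ := fun x y =>
  -3 * coefA P Q R S x y * (coefA P Q R S x y * S x y - pdy (coefB P Q R S) x y)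
      / (5 * (coefB P Q R S x y)^2)
    - 3 * (pdy (coefA P Q R S) x y + pdx (coefB P Q R S) x y
        - 3 * coefA P Q R S x y * R x y) / (5 * coefB P Q R S x y)
    - (6/5) * Q x y

/-- `φ₂` given by formula (4.8). -/
def phiB2 (P Q R S : ℝ → ℝ → ℝ) : ℝ → ℝ → ℝ := fun x y =>
  3 * (coefA P Q R S x y * S x y - pdy (coefB P Q R S) x y) / (5 * coefB P Q R S x y)
    - (3/5) * R x y

/-!
By the quotient rule, `Ω` is a rational expression in `B` with numerator built from `A`, `B`,
their partial derivatives up to order two, and `Q`, `R`, `S` with their first derivatives.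
The mixed derivatives `B_{1.1}` contributed by `∂φ₁/∂y` and by `∂φ₂/∂x` cancel by Schwarz's
theorem, and after clearing the powers of `B` what remains is a polynomial identity.
-/

open Function

section PartialDerivatives

variable {f : ℝ → ℝ → ℝ} {U : Set (ℝ × ℝ)} {x y : ℝ}

lemma hasDerivAt_pdx_fderiv (hf : DifferentiableAt ℝ (uncurry f) (x, y)) :
    HasDerivAt (fun t => f t y) (fderiv ℝ (uncurry f) (x, y) (1, 0)) x :=
  HasFDerivAt.comp_hasDerivAt (f := fun t => (t, y)) x hf.hasFDerivAt
    ((hasDerivAt_id' x).prodMk (hasDerivAt_const x y))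

lemma hasDerivAt_pdy_fderiv (hf : DifferentiableAt ℝ (uncurry f) (x, y)) :
    HasDerivAt (fun t => f x t) (fderiv ℝ (uncurry f) (x, y) (0, 1)) y :=
  HasFDerivAt.comp_hasDerivAt (f := fun t => (x, t)) y hf.hasFDerivAt
    ((hasDerivAt_const y x).prodMk (hasDerivAt_id' y))

lemma pdx_eq_fderiv (hf : DifferentiableAt ℝ (uncurry f) (x, y)) :
    pdx f x y = fderiv ℝ (uncurry f) (x, y) (1, 0) :=
  (hasDerivAt_pdx_fderiv hf).deriv

lemma pdy_eq_fderiv (hf : DifferentiableAt ℝ (uncurry f) (x, y)) :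
    pdy f x y = fderiv ℝ (uncurry f) (x, y) (0, 1) :=
  (hasDerivAt_pdy_fderiv hf).deriv

lemma hasDerivAt_pdx (hf : DifferentiableAt ℝ (uncurry f) (x, y)) :
    HasDerivAt (fun t => f t y) (pdx f x y) x :=
  pdx_eq_fderiv hf ▸ hasDerivAt_pdx_fderiv hf

lemma hasDerivAt_pdy (hf : DifferentiableAt ℝ (uncurry f) (x, y)) :
    HasDerivAt (fun t => f x t) (pdy f x y) y :=
  pdy_eq_fderiv hf ▸ hasDerivAt_pdy_fderiv hf

lemma pdx_congr {g : ℝ → ℝ → ℝ} (h : uncurry f =ᶠ[nhds (x, y)] uncurry g) :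
    pdx f x y = pdx g x y :=
  Filter.EventuallyEq.deriv_eq
    (((continuous_id.prodMk continuous_const).tendsto x).eventually h)

lemma pdy_congr {g : ℝ → ℝ → ℝ} (h : uncurry f =ᶠ[nhds (x, y)] uncurry g) :
    pdy f x y = pdy g x y :=
  Filter.EventuallyEq.deriv_eq
    (((continuous_const.prodMk continuous_id).tendsto y).eventually h)

lemma Smooth2.differentiableAt (hf : Smooth2 U f) (hU : IsOpen U) (hxy : (x, y) ∈ U) :
    DifferentiableAt ℝ (uncurry f) (x, y) :=
  (hf.contDiffAt (hU.mem_nhds hxy)).differentiableAt (by simp)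

lemma Smooth2.pdx (hf : Smooth2 U f) (hU : IsOpen U) : Smooth2 U (pdx f) := by
  have h : ContDiffOn ℝ (⊤ : ℕ∞) (fun p => fderiv ℝ (uncurry f) p (1, 0)) U :=
    (hf.fderiv_of_isOpen hU (by exact_mod_cast le_top)).clm_apply contDiffOn_const
  exact h.congr fun ⟨a, b⟩ hp => pdx_eq_fderiv (hf.differentiableAt hU hp)

lemma Smooth2.pdy (hf : Smooth2 U f) (hU : IsOpen U) : Smooth2 U (pdy f) := by
  have h : ContDiffOn ℝ (⊤ : ℕ∞) (fun p => fderiv ℝ (uncurry f) p (0, 1)) U :=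
    (hf.fderiv_of_isOpen hU (by exact_mod_cast le_top)).clm_apply contDiffOn_const
  exact h.congr fun ⟨a, b⟩ hp => pdy_eq_fderiv (hf.differentiableAt hU hp)

lemma pdx_pdy_comm (hf : Smooth2 U f) (hU : IsOpen U) (hxy : (x, y) ∈ U) :
    pdx (pdy f) x y = pdy (pdx f) x y := by
  set F := uncurry f
  have hF : ContDiffAt ℝ (⊤ : ℕ∞) F (x, y) := hf.contDiffAt (hU.mem_nhds hxy)
  have hF' : DifferentiableAt ℝ (fderiv ℝ F) (x, y) :=
    (hF.fderiv_right (m := 1) (WithTop.coe_le_coe.2 le_top)).differentiableAt one_ne_zero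
  have fderiv_apply_fderiv : ∀ v w : ℝ × ℝ,
      fderiv ℝ (fun p => fderiv ℝ F p v) (x, y) w = fderiv ℝ (fderiv ℝ F) (x, y) w v := by
    intro v w
    rw [fderiv_clm_apply hF' (differentiableAt_const v)]
    simp
  have hdiff : ∀ v : ℝ × ℝ, DifferentiableAt ℝ (fun p => fderiv ℝ F p v) (x, y) :=
    fun v => hF'.clm_apply (differentiableAt_const v)
  have hpdy : uncurry (pdy f) =ᶠ[nhds (x, y)] fun p => fderiv ℝ F p (0, 1) := by
    filter_upwards [hU.mem_nhds hxy] with ⟨a, b⟩ hp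
    exact pdy_eq_fderiv (hf.differentiableAt hU hp)
  have hpdx : uncurry (pdx f) =ᶠ[nhds (x, y)] fun p => fderiv ℝ F p (1, 0) := by
    filter_upwards [hU.mem_nhds hxy] with ⟨a, b⟩ hp
    exact pdx_eq_fderiv (hf.differentiableAt hU hp)
  calc pdx (pdy f) x y = fderiv ℝ (fun p => fderiv ℝ F p (0, 1)) (x, y) (1, 0) :=
        (pdx_congr (g := fun a b => fderiv ℝ F (a, b) (0, 1)) hpdy).trans
          (pdx_eq_fderiv (hdiff _))
    _ = fderiv ℝ (fderiv ℝ F) (x, y) (1, 0) (0, 1) := fderiv_apply_fderiv _ _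
    _ = fderiv ℝ (fderiv ℝ F) (x, y) (0, 1) (1, 0) :=
        hF.isSymmSndFDerivAt (by simpa using WithTop.coe_le_coe.2 (le_top : (2 : ℕ∞) ≤ ⊤)) _ _
    _ = fderiv ℝ (fun p => fderiv ℝ F p (1, 0)) (x, y) (0, 1) := (fderiv_apply_fderiv _ _).symm
    _ = pdy (pdx f) x y :=
        ((pdy_congr (g := fun a b => fderiv ℝ F (a, b) (1, 0)) hpdx).trans
          (pdy_eq_fderiv (hdiff _))).symm

end PartialDerivatives

section Coefficients

variable {U : Set (ℝ × ℝ)} {P Q R S : ℝ → ℝ → ℝ} {x y : ℝ}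

local notation "𝒜" => coefA P Q R S
local notation "ℬ" => coefB P Q R S

lemma smooth2_coefA (hU : IsOpen U)
    (hP : Smooth2 U P) (hQ : Smooth2 U Q) (hR : Smooth2 U R) (hS : Smooth2 U S) :
    Smooth2 U 𝒜 := by
  have := (hP.pdy hU).pdy hU
  have := (hQ.pdy hU).pdx hU
  have := (hR.pdx hU).pdx hU
  have := hP.pdx hU
  have := hP.pdy hU
  have := hQ.pdy hU
  have := hR.pdx hU
  have := hR.pdy hU
  have := hS.pdx hU
  unfold Smooth2 coefA at *
  simp only [uncurry_def] at *
  fun_prop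

lemma smooth2_coefB (hU : IsOpen U)
    (hP : Smooth2 U P) (hQ : Smooth2 U Q) (hR : Smooth2 U R) (hS : Smooth2 U S) :
    Smooth2 U ℬ := by
  have := (hS.pdx hU).pdx hU
  have := (hR.pdy hU).pdx hU
  have := (hQ.pdy hU).pdy hU
  have := hP.pdy hU
  have := hS.pdy hU
  have := hQ.pdx hU
  have := hS.pdx hU
  have := hQ.pdy hU
  have := hR.pdx hU
  unfold Smooth2 coefB at *
  simp only [uncurry_def] at *
  fun_prop

lemma pdy_phiB1 (hU : IsOpen U)
    (hP : Smooth2 U P) (hQ : Smooth2 U Q) (hR : Smooth2 U R) (hS : Smooth2 U S)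
    (hxy : (x, y) ∈ U) (hB0 : ℬ x y ≠ 0) :
    pdy (phiB1 P Q R S) x y =
      -(3/5) * ((pdy 𝒜 x y * (𝒜 x y * S x y - pdy ℬ x y)
          + 𝒜 x y * (pdy 𝒜 x y * S x y + 𝒜 x y * pdy S x y - pdy (pdy ℬ) x y)) / ℬ x y ^ 2
        - 2 * 𝒜 x y * (𝒜 x y * S x y - pdy ℬ x y) * pdy ℬ x y / ℬ x y ^ 3)
      - (3/5) * ((pdy (pdy 𝒜) x y + pdy (pdx ℬ) x y
          - 3 * (pdy 𝒜 x y * R x y + 𝒜 x y * pdy R x y)) / ℬ x y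
        - (pdy 𝒜 x y + pdx ℬ x y - 3 * 𝒜 x y * R x y) * pdy ℬ x y / ℬ x y ^ 2)
      - (6/5) * pdy Q x y := by
  have hA := smooth2_coefA hU hP hQ hR hS
  have hB := smooth2_coefB hU hP hQ hR hS
  have dA := hasDerivAt_pdy (hA.differentiableAt hU hxy)
  have dAy := hasDerivAt_pdy ((hA.pdy hU).differentiableAt hU hxy)
  have dB := hasDerivAt_pdy (hB.differentiableAt hU hxy)
  have dBy := hasDerivAt_pdy ((hB.pdy hU).differentiableAt hU hxy)
  have dBx := hasDerivAt_pdy ((hB.pdx hU).differentiableAt hU hxy)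
  have dQ := hasDerivAt_pdy (hQ.differentiableAt hU hxy)
  have dR := hasDerivAt_pdy (hR.differentiableAt hU hxy)
  have dS := hasDerivAt_pdy (hS.differentiableAt hU hxy)
  have hφ := ((((dA.const_mul (-3 : ℝ)).mul ((dA.mul dS).sub dBy)).div
      ((dB.fun_pow 2).const_mul 5) (by positivity)).sub
    ((((dAy.add dBx).sub ((dA.const_mul (3 : ℝ)).mul dR)).const_mul (3 : ℝ)).div
      (dB.const_mul 5) (by positivity))).sub (dQ.const_mul ((6 : ℝ) / 5))
  refine hφ.deriv.trans ?_
  simp only [Pi.mul_apply, Pi.sub_apply, Pi.add_apply]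
  field_simp
  ring

lemma pdx_phiB2 (hU : IsOpen U)
    (hP : Smooth2 U P) (hQ : Smooth2 U Q) (hR : Smooth2 U R) (hS : Smooth2 U S)
    (hxy : (x, y) ∈ U) (hB0 : ℬ x y ≠ 0) :
    pdx (phiB2 P Q R S) x y =
      (3/5) * ((pdx 𝒜 x y * S x y + 𝒜 x y * pdx S x y - pdx (pdy ℬ) x y) / ℬ x y
        - (𝒜 x y * S x y - pdy ℬ x y) * pdx ℬ x y / ℬ x y ^ 2)
      - (3/5) * pdx R x y := by
  have hA := smooth2_coefA hU hP hQ hR hS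
  have hB := smooth2_coefB hU hP hQ hR hS
  have dA := hasDerivAt_pdx (hA.differentiableAt hU hxy)
  have dB := hasDerivAt_pdx (hB.differentiableAt hU hxy)
  have dBy := hasDerivAt_pdx ((hB.pdy hU).differentiableAt hU hxy)
  have dR := hasDerivAt_pdx (hR.differentiableAt hU hxy)
  have dS := hasDerivAt_pdx (hS.differentiableAt hU hxy)
  have hφ := ((((dA.mul dS).sub dBy).const_mul (3 : ℝ)).div
      (dB.const_mul 5) (by positivity)).sub (dR.const_mul ((3 : ℝ) / 5))
  refine hφ.deriv.trans ?_
  simp only [Pi.mul_apply, Pi.sub_apply]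
  field_simp

end Coefficients

theorem Omega_effective_formula_B_ne_zero_general
    (U : Set (ℝ × ℝ)) (hU : IsOpen U)
    (P Q R S : ℝ → ℝ → ℝ)
    (hP : Smooth2 U P) (hQ : Smooth2 U Q) (hR : Smooth2 U R) (hS : Smooth2 U S)
    (hB : ∀ x y : ℝ, (x, y) ∈ U → coefB P Q R S x y ≠ 0) :
    ∀ x y : ℝ, (x, y) ∈ U →
      (5/3) * (pdy (phiB1 P Q R S) x y - pdx (phiB2 P Q R S) x y) =
        2 * coefA P Q R S x y * pdy (coefB P Q R S) x y *
            (coefA P Q R S x y * S x y - pdy (coefB P Q R S) x y)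
            / (coefB P Q R S x y)^3
        + (2 * pdy (coefA P Q R S) x y - 3 * coefA P Q R S x y * R x y) *
            pdy (coefB P Q R S) x y / (coefB P Q R S x y)^2
        + (pdx (coefB P Q R S) x y - 2 * pdy (coefA P Q R S) x y) *
            coefA P Q R S x y * S x y / (coefB P Q R S x y)^2
        + (coefA P Q R S x y * pdy (pdy (coefB P Q R S)) x y
            - (coefA P Q R S x y)^2 * pdy S x y) / (coefB P Q R S x y)^2
        - pdy (pdy (coefA P Q R S)) x y / coefB P Q R S x y
        + (3 * pdy (coefA P Q R S) x y * R x y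
            + 3 * coefA P Q R S x y * pdy R x y
            - pdx (coefA P Q R S) x y * S x y
            - coefA P Q R S x y * pdx S x y) / coefB P Q R S x y
        + pdx R x y - 2 * pdy Q x y := by
  intro x y hxy
  have hb := hB x y hxy
  rw [pdy_phiB1 hU hP hQ hR hS hxy hb, pdx_phiB2 hU hP hQ hR hS hxy hb,
    pdx_pdy_comm (smooth2_coefB hU hP hQ hR hS) hU hxy]
  field_simp
  ring

/-- Effective formula (4.17) for `Ω = (5/3)·(∂φ₁/∂y − ∂φ₂/∂x)` when `B ≠ 0`. -/
theorem Omega_effective_formula_B_ne_zero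
    (U : Set (ℝ × ℝ)) (hU : IsOpen U) (hUconn : IsConnected U)
    (P Q R S : ℝ → ℝ → ℝ)
    (hP : Smooth2 U P) (hQ : Smooth2 U Q) (hR : Smooth2 U R) (hS : Smooth2 U S)
    (hB : ∀ x y : ℝ, (x, y) ∈ U → coefB P Q R S x y ≠ 0) :
    ∀ x y : ℝ, (x, y) ∈ U →
      (5/3) * (pdy (phiB1 P Q R S) x y - pdx (phiB2 P Q R S) x y) =
        2 * coefA P Q R S x y * pdy (coefB P Q R S) x y *
            (coefA P Q R S x y * S x y - pdy (coefB P Q R S) x y)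
            / (coefB P Q R S x y)^3
        + (2 * pdy (coefA P Q R S) x y - 3 * coefA P Q R S x y * R x y) *
            pdy (coefB P Q R S) x y / (coefB P Q R S x y)^2
        + (pdx (coefB P Q R S) x y - 2 * pdy (coefA P Q R S) x y) *
            coefA P Q R S x y * S x y / (coefB P Q R S x y)^2
        + (coefA P Q R S x y * pdy (pdy (coefB P Q R S)) x y
            - (coefA P Q R S x y)^2 * pdy S x y) / (coefB P Q R S x y)^2
        - pdy (pdy (coefA P Q R S)) x y / coefB P Q R S x y
        + (3 * pdy (coefA P Q R S) x y * R x y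
            + 3 * coefA P Q R S x y * pdy R x y
            - pdx (coefA P Q R S) x y * S x y
            - coefA P Q R S x y * pdx S x y) / coefB P Q R S x y
        + pdx R x y - 2 * pdy Q x y :=
  Omega_effective_formula_B_ne_zero_general U hU P Q R S hP hQ hR hS hB
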